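/- (Lemma 4.1, second statement) For each t ≥ 0, sup_{s ∈ [0,t]} |(1/n) ψ_e(t_n − s) − e^{−s}| → 0 as n → ∞ (where the supremum is taken for all n large enough that t_n ≥ t). -/
import Mathlib


noncomputable section

/-- The interpolation times `t_k = ∑_{j=1}^k 1/(j+1)` (so `t_0 = 0`). -/
def tSeq (k : ℕ) : ℝ := ∑ j ∈ Finset.range k, (1 : ℝ) / (j + 2)

/-- `m(s) = sup {k ∈ ℕ₀ : t_k ≤ s}`. -/
def mFun (s : ℝ) : ℕ := sSup {k : ℕ | tSeq k ≤ s}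

/-- `ψ_e(s) = m(s) + 2`. -/
def psiE (s : ℝ) : ℝ := (mFun s : ℝ) + 2

lemma tSeq_strictMono : StrictMono tSeq := by
  apply strictMono_nat_of_lt_succ
  intro n
  rw [tSeq, tSeq, Finset.sum_range_succ]
  have : (0:ℝ) < 1 / (n + 2) := by positivity
  linarith

lemma tSeq_tendsto : Filter.Tendsto tSeq Filter.atTop Filter.atTop := by
  have h := Real.tendsto_sum_range_one_div_nat_succ_atTop
  have heq : tSeq = fun n => (∑ i ∈ Finset.range (n+1), (1:ℝ)/(i+1)) - 1 := by
    funext n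
    rw [tSeq, Finset.sum_range_succ']
    norm_num
    apply Finset.sum_congr rfl
    intro j _
    ring
  rw [heq]
  apply Filter.tendsto_atTop_add_const_right
  exact h.comp (Filter.tendsto_add_atTop_nat 1)

lemma mFun_spec {s : ℝ} (hs : 0 ≤ s) :
    tSeq (mFun s) ≤ s ∧ s < tSeq (mFun s + 1) := by
  set S := {k : ℕ | tSeq k ≤ s} with hS
  have h0 : 0 ∈ S := by simp [hS, tSeq, hs]
  obtain ⟨N, hN⟩ := (Filter.tendsto_atTop.1 tSeq_tendsto (s+1)).exists
  have hbdd : BddAbove S := by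
    refine ⟨N, fun k hk => ?_⟩
    by_contra h
    push_neg at h
    have := tSeq_strictMono.monotone h.le
    have : tSeq k ≤ s := hk
    linarith
  constructor
  · exact Nat.sSup_mem ⟨0, h0⟩ hbdd
  · by_contra h
    push_neg at h
    have : mFun s + 1 ≤ mFun s := le_csSup hbdd h
    omega

lemma log_step_le (j : ℕ) : Real.log ((j:ℝ)+2) - Real.log ((j:ℝ)+1) ≤ 1/((j:ℝ)+1) := by
  have h1 : (0:ℝ) < (j:ℝ)+1 := by positivity
  have h2 : (0:ℝ) < (j:ℝ)+2 := by positivity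
  rw [← Real.log_div (by positivity) (by positivity)]
  have := Real.log_le_sub_one_of_pos (x := ((j:ℝ)+2)/((j:ℝ)+1)) (by positivity)
  have heq : ((j:ℝ)+2)/((j:ℝ)+1) - 1 = 1/((j:ℝ)+1) := by field_simp; ring
  linarith

lemma le_log_step (j : ℕ) : 1/((j:ℝ)+2) ≤ Real.log ((j:ℝ)+2) - Real.log ((j:ℝ)+1) := by
  have h2 : (0:ℝ) < (j:ℝ)+2 := by positivity
  have := Real.log_le_sub_one_of_pos (x := ((j:ℝ)+1)/((j:ℝ)+2)) (by positivity)
  rw [Real.log_div (by positivity) (by positivity)] at this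
  have heq : ((j:ℝ)+1)/((j:ℝ)+2) - 1 = -(1/((j:ℝ)+2)) := by field_simp; ring
  linarith

lemma tSeq_sub {k n : ℕ} (h : k ≤ n) :
    tSeq n - tSeq k = ∑ j ∈ Finset.Ico k n, (1:ℝ)/(j+2) := by
  rw [tSeq, tSeq, eq_comm, Finset.sum_Ico_eq_sub _ h]

lemma tSeq_sub_le {k n : ℕ} (h : k ≤ n) :
    tSeq n - tSeq k ≤ Real.log (((n:ℝ)+1)/((k:ℝ)+1)) := by
  rw [tSeq_sub h, Real.log_div (by positivity) (by positivity)]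
  have tele : ∑ j ∈ Finset.Ico k n, (Real.log ((j:ℝ)+2) - Real.log ((j:ℝ)+1))
      = Real.log ((n:ℝ)+1) - Real.log ((k:ℝ)+1) := by
    rw [Finset.sum_Ico_eq_sub _ h]
    have e : ∀ m : ℕ, ∑ j ∈ Finset.range m, (Real.log ((j:ℝ)+2) - Real.log ((j:ℝ)+1))
        = Real.log ((m:ℝ)+1) := by
      intro m
      have := Finset.sum_range_sub (f := fun j : ℕ => Real.log ((j:ℝ)+1)) m
      simp only [Nat.cast_zero, zero_add, Real.log_one, sub_zero] at this
      rw [← this]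
      apply Finset.sum_congr rfl; intro j _; push_cast; ring_nf
    rw [e n, e k]
  rw [← tele]
  exact Finset.sum_le_sum fun j _ => le_log_step j

lemma le_tSeq_sub {k n : ℕ} (h : k ≤ n) :
    Real.log (((n:ℝ)+2)/((k:ℝ)+2)) ≤ tSeq n - tSeq k := by
  rw [tSeq_sub h, Real.log_div (by positivity) (by positivity)]
  have tele : ∑ j ∈ Finset.Ico k n, (Real.log ((j:ℝ)+3) - Real.log ((j:ℝ)+2))
      = Real.log ((n:ℝ)+2) - Real.log ((k:ℝ)+2) := by
    rw [Finset.sum_Ico_eq_sub _ h]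
    have e : ∀ m : ℕ, ∑ j ∈ Finset.range m, (Real.log ((j:ℝ)+3) - Real.log ((j:ℝ)+2))
        = Real.log ((m:ℝ)+2) - Real.log 2 := by
      intro m
      have := Finset.sum_range_sub (f := fun j : ℕ => Real.log ((j:ℝ)+2)) m
      simp only [Nat.cast_zero, zero_add] at this
      rw [← this]
      apply Finset.sum_congr rfl; intro j _; push_cast; ring_nf
    rw [e n, e k]; ring
  rw [← tele]
  apply Finset.sum_le_sum
  intro j _
  have := log_step_le (j+1)
  push_cast at this
  have e1 : (j:ℝ)+1+2 = (j:ℝ)+3 := by ring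
  have e2 : (j:ℝ)+1+1 = (j:ℝ)+2 := by ring
  rw [e1, e2] at this
  linarith

lemma psiE_key {n : ℕ} (hn : 1 ≤ n) {s : ℝ} (hs0 : 0 ≤ s) (hsn : s ≤ tSeq n) :
    |psiE (tSeq n - s) / n - Real.exp (-s)| ≤ 2 / n := by
  have hn' : (0:ℝ) < n := by exact_mod_cast hn
  set k := mFun (tSeq n - s) with hk
  obtain ⟨h1, h2⟩ := mFun_spec (s := tSeq n - s) (by linarith)
  rw [← hk] at h1 h2
  have hkn : k ≤ n := by
    by_contra h
    push_neg at h
    have := tSeq_strictMono h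
    linarith
  set E := Real.exp (-s) with hE
  have hE0 : 0 < E := Real.exp_pos _
  have hE1 : E ≤ 1 := Real.exp_le_one_iff.mpr (by linarith)
  have hexp : Real.exp s * E = 1 := by rw [hE, ← Real.exp_add]; simp
  -- upper bound : k + 2 ≤ n * E + 2
  have hub : (k:ℝ) + 1 ≤ ((n:ℝ) + 1) * E := by
    have h3 : s ≤ Real.log (((n:ℝ)+1)/((k:ℝ)+1)) := le_trans (by linarith) (tSeq_sub_le hkn)
    have h4 : Real.exp s ≤ ((n:ℝ)+1)/((k:ℝ)+1) := by
      calc Real.exp s ≤ Real.exp (Real.log (((n:ℝ)+1)/((k:ℝ)+1))) := Real.exp_le_exp.mpr h3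
        _ = ((n:ℝ)+1)/((k:ℝ)+1) := Real.exp_log (by positivity)
    have h5 : ((k:ℝ)+1) * Real.exp s ≤ (n:ℝ)+1 := by
      have := (le_div_iff₀ (show (0:ℝ) < (k:ℝ)+1 by positivity)).mp h4
      linarith
    nlinarith [mul_le_mul_of_nonneg_right h5 hE0.le]
  -- lower bound
  have hlb : (n:ℝ) * E - 1 ≤ (k:ℝ) + 2 := by
    rcases eq_or_lt_of_le hkn with heq | hlt
    · -- k = n forces s = 0
      rw [heq] at h1
      have hs0' : s ≤ 0 := by linarith
      have hsz : s = 0 := le_antisymm hs0' hs0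
      have hEe : E = 1 := by rw [hE, hsz]; simp
      have hkc : ((k:ℕ):ℝ) = (n:ℝ) := by exact_mod_cast congrArg Nat.cast heq
      rw [hEe]
      nlinarith
    · have hk1n : k + 1 ≤ n := hlt
      have h3 : Real.log (((n:ℝ)+2)/(((k:ℕ):ℝ)+3)) < s := by
        have := le_tSeq_sub hk1n
        push_cast at this
        have e1 : (k:ℝ)+1+2 = (k:ℝ)+3 := by ring
        rw [e1] at this
        linarith
      have h4 : ((n:ℝ)+2)/((k:ℝ)+3) < Real.exp s := by
        calc ((n:ℝ)+2)/((k:ℝ)+3) = Real.exp (Real.log (((n:ℝ)+2)/((k:ℝ)+3))) :=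
              (Real.exp_log (by positivity)).symm
          _ < Real.exp s := Real.exp_lt_exp.mpr h3
      have h5 : (n:ℝ)+2 < ((k:ℝ)+3) * Real.exp s := by
        rw [div_lt_iff₀ (by positivity)] at h4
        linarith
      have h6 : ((n:ℝ)+2) * E < (k:ℝ)+3 := by
        nlinarith [mul_lt_mul_of_pos_right h5 hE0]
      nlinarith
  -- combine
  have hpsi : psiE (tSeq n - s) = (k:ℝ) + 2 := rfl
  rw [hpsi]
  have heq2 : ((k:ℝ) + 2) / n - E = (((k:ℝ) + 2) - n * E) / n := by field_simp
  rw [heq2, abs_div, abs_of_pos hn']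
  have habs : |((k:ℝ) + 2) - n * E| ≤ 2 := by
    rw [abs_le]; constructor <;> nlinarith
  gcongr

/-- **(Lemma 4.1, second statement.)** For each `t ≥ 0`,
`sup_{s ∈ [0,t]} |(1/n) ψ_e(t_n − s) − e^{−s}| → 0` as `n → ∞`. -/
theorem psiE_div_tendsto_uniformly (t : ℝ) (ht : 0 ≤ t) :
    Filter.Tendsto
      (fun n : ℕ => ⨆ s : Set.Icc (0 : ℝ) t, |psiE (tSeq n - s) / n - Real.exp (-(s : ℝ))|)
      Filter.atTop (nhds 0) := by
  have hne : Nonempty (Set.Icc (0:ℝ) t) := ⟨⟨0, Set.mem_Icc.mpr ⟨le_refl 0, ht⟩⟩⟩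
  apply squeeze_zero'
  · filter_upwards with n
    exact Real.iSup_nonneg fun s => abs_nonneg _
  · filter_upwards [tSeq_tendsto.eventually_ge_atTop t, Filter.eventually_ge_atTop 1]
      with n hnt hn1
    apply ciSup_le
    intro s
    exact psiE_key hn1 s.2.1 (le_trans s.2.2 hnt)
  · exact tendsto_const_div_atTop_nhds_zero_nat 2

end
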